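/- Let (X,d) be a complete metric space and T : X → X satisfy: there are constants a, b, c with 0 < a < 1, a + b = 1, 0 ≤ c < 1/2, and d(T x, T y) ≤ a · max(d(x,y), c·(d(x,T y)+d(y,T x))) + b · max(d(x,T x), d(y,T y)) for all x, y ∈ X. Suppose (z_n) is a sequence in X with d(z_{n+1}, T z_{n+1}) ≤ K · d(z_n, T z_n) for some 0 ≤ K < 1 and all n. Then (z_n) is a Cauchy sequence. -/

import Mathlib

/-!
Bounding `d(Tx, Ty)` in `d(x, y) ≤ d(x, Tx) + d(Tx, Ty) + d(Ty, y)` by the contraction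
condition gives `(1 - a) d(x, y) ≤ 2 (d(x, Tx) + d(y, Ty))`: points with small displacement
are close to each other. The displacements of `z n` decay geometrically, hence so do the
distances `d(z n, z m)`.
-/

open Filter Topology

section

variable {X : Type*} [MetricSpace X]

def IsGregusCiricContraction (T : X → X) (a b c : ℝ) : Prop :=
  ∀ x y : X, dist (T x) (T y) ≤
    a * max (dist x y) (c * (dist x (T y) + dist y (T x))) +
    b * max (dist x (T x)) (dist y (T y))

theorem IsGregusCiricContraction.mul_dist_le {T : X → X} {a b c : ℝ}
    (hT : IsGregusCiricContraction T a b c) (ha : 0 ≤ a) (hb : 0 ≤ b) (hab : a + b = 1)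
    (hc : c ≤ 1 / 2) (x y : X) :
    (1 - a) * dist x y ≤ 2 * (dist x (T x) + dist y (T y)) := by
  set s := dist x (T x) + dist y (T y)
  have hcross : c * (dist x (T y) + dist y (T x)) ≤ dist x y + s := by
    have hxTy := dist_triangle x y (T y)
    have hyTx := dist_triangle_left y (T x) x
    calc c * (dist x (T y) + dist y (T x))
        ≤ 1 / 2 * (dist x (T y) + dist y (T x)) := by gcongr
      _ ≤ dist x y + s := by
        linarith [dist_nonneg (x := x) (y := T x), dist_nonneg (x := y) (y := T y)]
  have hmax₁ : max (dist x y) (c * (dist x (T y) + dist y (T x))) ≤ dist x y + s :=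
    max_le (le_add_of_nonneg_right (by positivity)) hcross
  have hmax₂ : max (dist x (T x)) (dist y (T y)) ≤ s :=
    max_le (le_add_of_nonneg_right dist_nonneg) (le_add_of_nonneg_left dist_nonneg)
  calc (1 - a) * dist x y
      ≤ s + a * (dist x y + s) + b * s - a * dist x y := by
        have := dist_triangle4 x (T x) (T y) y
        rw [dist_comm (T y) y] at this
        linarith [hT x y, mul_le_mul_of_nonneg_left hmax₁ ha, mul_le_mul_of_nonneg_left hmax₂ hb]
    _ = 2 * s := by linear_combination s * hab

theorem cauchySeq_of_dist_le_add_of_tendsto {z : ℕ → X} {g : ℕ → ℝ}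
    (hd : ∀ n m, dist (z n) (z m) ≤ g n + g m) (hg : Tendsto g atTop (𝓝 0)) : CauchySeq z := by
  refine Metric.cauchySeq_iff'.2 fun ε hε => ?_
  obtain ⟨N, hN⟩ := eventually_atTop.1 (hg.eventually (gt_mem_nhds (half_pos hε)))
  exact ⟨N, fun n hn => (hd n N).trans_lt (by linarith [hN n hn, hN N le_rfl])⟩

theorem tendsto_zero_of_le_mul_of_lt_one {u : ℕ → ℝ} {K : ℝ} (hu₀ : ∀ n, 0 ≤ u n)
    (hK₀ : 0 ≤ K) (hK₁ : K < 1) (hu : ∀ n, u (n + 1) ≤ K * u n) :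
    Tendsto u atTop (𝓝 0) :=
  squeeze_zero hu₀ (fun n => le_geom hK₀ n fun k _ => hu k) <| by
    simpa using (tendsto_pow_atTop_nhds_zero_of_lt_one hK₀ hK₁).mul_const (u 0)

end

theorem stmt_5_general {X : Type*} [MetricSpace X] (T : X → X) (a b c : ℝ)
    (ha0 : 0 < a) (ha1 : a < 1) (hab : a + b = 1) (hc : c < 1/2)
    (hT : ∀ x y : X, dist (T x) (T y) ≤
      a * max (dist x y) (c * (dist x (T y) + dist y (T x))) +
      b * max (dist x (T x)) (dist y (T y)))
    (z : ℕ → X) (K : ℝ) (hK0 : 0 ≤ K) (hK1 : K < 1)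
    (hz : ∀ n : ℕ, dist (z (n+1)) (T (z (n+1))) ≤ K * dist (z n) (T (z n))) :
    CauchySeq z := by
  have hGC : IsGregusCiricContraction T a b c := hT
  have hdist : ∀ n m, dist (z n) (z m) ≤
      2 / (1 - a) * dist (z n) (T (z n)) + 2 / (1 - a) * dist (z m) (T (z m)) := fun n m => by
    rw [← mul_add, div_mul_eq_mul_div, le_div_iff₀ (sub_pos.2 ha1), mul_comm]
    exact hGC.mul_dist_le ha0.le (by linarith) hab hc.le (z n) (z m)
  have hdisp : Tendsto (fun n => dist (z n) (T (z n))) atTop (𝓝 0) :=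
    tendsto_zero_of_le_mul_of_lt_one (fun _ => dist_nonneg) hK0 hK1 hz
  exact cauchySeq_of_dist_le_add_of_tendsto hdist (by simpa using hdisp.const_mul (2 / (1 - a)))

theorem stmt_5 {X : Type*} [MetricSpace X] [CompleteSpace X] (T : X → X) (a b c : ℝ)
    (ha0 : 0 < a) (ha1 : a < 1) (hab : a + b = 1) (hc0 : 0 ≤ c) (hc : c < 1/2)
    (hT : ∀ x y : X, dist (T x) (T y) ≤
      a * max (dist x y) (c * (dist x (T y) + dist y (T x))) +
      b * max (dist x (T x)) (dist y (T y)))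
    (z : ℕ → X) (K : ℝ) (hK0 : 0 ≤ K) (hK1 : K < 1)
    (hz : ∀ n : ℕ, dist (z (n+1)) (T (z (n+1))) ≤ K * dist (z n) (T (z n))) :
    CauchySeq z :=
  stmt_5_general T a b c ha0 ha1 hab hc hT z K hK0 hK1 hz
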